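/- Let G be a simple graph on a finite vertex type V, let C ⊆ V, and let k, t ∈ ℕ. Let m : V → ℕ be defined by m v = 1 if v ∈ C and m v = k + 1 if v ∉ C, and let G' = G⟨m⟩ be the fiber-clique blow-up. Then there exists a set B ⊆ C with |B| ≤ k such that every dominating set of G of size at most t intersects B, if and only if there exists a set B' of vertices of G' with |B'| ≤ k such that every dominating set of G' of size at most t intersects B'. -/

import Mathlib

/-!
Call `B` a blocker if it meets every dominating set of size at most `t`. A dominating set of
`G⟨m⟩` projects to a dominating set of `G` (the fibers are nonempty), and, because the fibers are
cliques, a dominating set of `G` lifts along any section `v ↦ ⟨v, s v⟩` to one of `G⟨m⟩`; neither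
operation increases the size. So a blocker `B ⊆ C` of `G` lifts to its preimage, which has the same
size because the fibers over `C` are singletons. Conversely, a blocker `B'` of size at most `k`
misses some vertex of every fiber of size `k + 1`; a section through such vertices over `V \ C`
pulls `B'` back to a blocker of `G` inside `C`.
-/

/-- The fiber-clique blow-up `G⟨m⟩` of a simple graph `G` along `m : V → ℕ`: the vertex type is
`Σ v : V, Fin (m v)`, and two distinct vertices `⟨u, i⟩` and `⟨v, j⟩` are adjacent iff `u = v`
or `u` and `v` are adjacent in `G`. -/
def SimpleGraph.fiberCliqueBlowup {V : Type*} (G : SimpleGraph V) (m : V → ℕ) :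
    SimpleGraph (Σ v : V, Fin (m v)) where
  Adj a b := a ≠ b ∧ (a.1 = b.1 ∨ G.Adj a.1 b.1)
  symm := by
    constructor
    rintro a b ⟨hne, h⟩
    exact ⟨hne.symm, by cases h with
      | inl h => exact Or.inl h.symm
      | inr h => exact Or.inr (G.adj_symm h)⟩
  loopless := by constructor; rintro a ⟨hne, -⟩; exact hne rfl

/-- A set `D` of vertices of a graph `H` is a dominating set if every vertex `w` satisfies
`w ∈ D` or `w` is adjacent to some vertex of `D`. -/
def SimpleGraph.IsDominatingSet {W : Type*} (H : SimpleGraph W) (D : Set W) : Prop :=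
  ∀ w : W, w ∈ D ∨ ∃ d ∈ D, H.Adj w d

namespace Set

variable {α : Type*} {β : α → Type*}

theorem exists_sigma_mk_notMem_of_ncard_lt [∀ a, Finite (β a)] {B : Set (Σ a, β a)}
    (hB : B.Finite) (a : α) (hlt : B.ncard < Nat.card (β a)) :
    ∃ b : β a, (⟨a, b⟩ : Σ a, β a) ∉ B := by
  by_contra! hfiber
  have hle : (univ : Set (β a)).ncard ≤ B.ncard :=
    ncard_le_ncard_of_injOn (Sigma.mk a) (fun b _ => hfiber b) sigma_mk_injective.injOn hB
  rw [ncard_univ] at hle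
  omega

theorem ncard_preimage_sigma_fst_le {B : Set α} (hB : B.Finite)
    (hsub : ∀ a ∈ B, Subsingleton (β a)) :
    (Sigma.fst ⁻¹' B : Set (Σ a, β a)).ncard ≤ B.ncard := by
  refine ncard_le_ncard_of_injOn Sigma.fst (fun _ h => h) ?_ hB
  rintro ⟨a, x⟩ ha ⟨_, y⟩ - (rfl : a = _)
  have := hsub a ha
  rw [Subsingleton.elim x y]

end Set

namespace SimpleGraph

variable {V W : Type*}

def IsDominationBlocker (H : SimpleGraph W) (t : ℕ) (B : Set W) : Prop :=
  ∀ D : Set W, H.IsDominatingSet D → D.ncard ≤ t → (D ∩ B).Nonempty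

variable {G : SimpleGraph V} {m : V → ℕ} {t : ℕ}

theorem IsDominatingSet.image_fst (hm : ∀ v, 0 < m v) {D : Set (Σ v, Fin (m v))}
    (hD : (G.fiberCliqueBlowup m).IsDominatingSet D) : G.IsDominatingSet (Sigma.fst '' D) := by
  intro w
  rcases hD ⟨w, ⟨0, hm w⟩⟩ with hw | ⟨d, hd, -, hdw | hadj⟩
  · exact Or.inl ⟨_, hw, rfl⟩
  · exact Or.inl ⟨d, hd, hdw.symm⟩
  · exact Or.inr ⟨d.1, ⟨d, hd, rfl⟩, hadj⟩

theorem IsDominatingSet.image_sigmaMk (s : ∀ v, Fin (m v)) {D : Set V}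
    (hD : G.IsDominatingSet D) :
    (G.fiberCliqueBlowup m).IsDominatingSet ((fun v => ⟨v, s v⟩) '' D) := by
  rintro ⟨w, j⟩
  rcases hD w with hw | ⟨d, hd, hadj⟩
  · by_cases hj : j = s w
    · exact Or.inl ⟨w, hw, by rw [hj]⟩
    · exact Or.inr ⟨⟨w, s w⟩, ⟨w, hw, rfl⟩, fun h => hj (Sigma.mk.inj_iff.mp h).2.eq, Or.inl rfl⟩
  · exact Or.inr ⟨⟨d, s d⟩, ⟨d, hd, rfl⟩, fun h => hadj.ne (congrArg Sigma.fst h), Or.inr hadj⟩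

theorem IsDominationBlocker.preimage_fst [Finite V] (hm : ∀ v, 0 < m v) {B : Set V}
    (hB : G.IsDominationBlocker t B) :
    (G.fiberCliqueBlowup m).IsDominationBlocker t (Sigma.fst ⁻¹' B) := by
  intro D hD hDt
  obtain ⟨_, ⟨a, ha, rfl⟩, haB⟩ :=
    hB _ (hD.image_fst hm) ((Set.ncard_image_le (Set.toFinite D)).trans hDt)
  exact ⟨a, ha, haB⟩

theorem IsDominationBlocker.preimage_sigmaMk (s : ∀ v, Fin (m v)) {B : Set (Σ v, Fin (m v))}
    (hB : (G.fiberCliqueBlowup m).IsDominationBlocker t B) :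
    G.IsDominationBlocker t ((fun v => ⟨v, s v⟩) ⁻¹' B) := by
  intro D hD hDt
  have hinj : Function.Injective (fun v => (⟨v, s v⟩ : Σ v, Fin (m v))) :=
    fun _ _ h => congrArg Sigma.fst h
  obtain ⟨_, ⟨v, hv, rfl⟩, hvB⟩ :=
    hB _ (hD.image_sigmaMk s) ((Set.ncard_image_of_injective D hinj).trans_le hDt)
  exact ⟨v, hv, hvB⟩

end SimpleGraph

open Classical in
theorem dominatingSet_interdiction_fiberCliqueBlowup {V : Type*} [Fintype V]
    (G : SimpleGraph V) (C : Set V) (k t : ℕ) (m : V → ℕ)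
    (hm : ∀ v : V, m v = if v ∈ C then 1 else k + 1) :
    (∃ B : Set V, B ⊆ C ∧ B.ncard ≤ k ∧
        ∀ D : Set V, G.IsDominatingSet D → D.ncard ≤ t → (D ∩ B).Nonempty) ↔
      (∃ B' : Set (Σ v : V, Fin (m v)), B'.ncard ≤ k ∧
        ∀ D' : Set (Σ v : V, Fin (m v)),
          (G.fiberCliqueBlowup m).IsDominatingSet D' → D'.ncard ≤ t → (D' ∩ B').Nonempty) := by
  have hpos : ∀ v, 0 < m v := fun v => by rw [hm]; split <;> omega
  constructor
  · rintro ⟨B, hBC, hBk, hB⟩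
    have hsub : ∀ v ∈ B, Subsingleton (Fin (m v)) := fun v hv => by
      rw [hm, if_pos (hBC hv)]
      infer_instance
    exact ⟨Sigma.fst ⁻¹' B, (Set.ncard_preimage_sigma_fst_le (Set.toFinite B) hsub).trans hBk,
      SimpleGraph.IsDominationBlocker.preimage_fst hpos hB⟩
  · rintro ⟨B', hB'k, hB'⟩
    have hsection : ∀ v, ∃ i : Fin (m v), v ∉ C → (⟨v, i⟩ : Σ v, Fin (m v)) ∉ B' := by
      intro v
      by_cases hv : v ∈ C
      · exact ⟨⟨0, hpos v⟩, absurd hv⟩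
      · have hlt : B'.ncard < Nat.card (Fin (m v)) := by
          rw [Nat.card_fin, hm, if_neg hv]
          omega
        obtain ⟨i, hi⟩ := Set.exists_sigma_mk_notMem_of_ncard_lt (Set.toFinite B') v hlt
        exact ⟨i, fun _ => hi⟩
    choose s hs using hsection
    have hBk : ((fun v => (⟨v, s v⟩ : Σ v, Fin (m v))) ⁻¹' B').ncard ≤ k :=
      (Set.ncard_le_ncard_of_injOn (fun v => ⟨v, s v⟩) (fun v hv => hv)
        (fun _ _ _ _ h => congrArg Sigma.fst h)).trans hB'k
    exact ⟨_, fun v hv => by_contra (hs v · hv), hBk,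
      SimpleGraph.IsDominationBlocker.preimage_sigmaMk s hB'⟩
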